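/- Harmonic mean bound for sums over linear maps: let $B_j:\mathbb{R}^n\to\mathbb{R}^{n_j}$ be linear maps, $c_j>0$, and $G_j,A_j$ positive definite on $\mathbb{R}^{n_j}$ such that $\sum_j c_jB_j^*G_jB_j$ and $\sum_j c_jB_j^*A_jB_j$ are positive definite. Then $\sum_{j=1}^m c_jB_j^*(G_j:A_j)B_j \le \big(\sum_{j=1}^m c_jB_j^*G_jB_j\big):\big(\sum_{j=1}^m c_jB_j^*A_jB_j\big)$, where $X:Y=(X^{-1}+Y^{-1})^{-1}$. -/

import Mathlib

/-!
For positive definite `X, Y` the harmonic mean `X : Y = (X⁻¹ + Y⁻¹)⁻¹` has the variational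
description `⟪x, (X : Y) x⟫ = min_{u + v = x} (⟪u, X u⟫ + ⟪v, Y v⟫)`: the lower bound comes from
`2⟪u, w⟫ ≤ ⟪u, X u⟫ + ⟪w, X⁻¹ w⟫` with `w = (X : Y) x`, and the minimum is attained at
`u = X⁻¹ w`, `v = Y⁻¹ w`. Given `x`, split it optimally for the pair `M_G = ∑ cⱼ Bⱼᵀ Gⱼ Bⱼ`,
`M_A = ∑ cⱼ Bⱼᵀ Aⱼ Bⱼ`; then `Bⱼ x = Bⱼ u + Bⱼ v` is an admissible split for each pair `Gⱼ, Aⱼ`,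
and summing the lower bounds gives `⟪x, ∑ cⱼ Bⱼᵀ (Gⱼ : Aⱼ) Bⱼ x⟫ ≤ ⟪x, (M_G : M_A) x⟫`.
-/

open Matrix

namespace Matrix

section QuadraticForm

variable {R n : Type*} [CommSemiring R] [Fintype n]

lemma dotProduct_transpose_mul_mul_mulVec {m : Type*} [Fintype m] (B : Matrix m n R)
    (M : Matrix m m R) (x y : n → R) :
    x ⬝ᵥ (Bᵀ * M * B) *ᵥ y = (B *ᵥ x) ⬝ᵥ M *ᵥ (B *ᵥ y) := by
  rw [← mulVec_mulVec, ← mulVec_mulVec, dotProduct_transpose_mulVec, dotProduct_comm]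

lemma dotProduct_sum_smul_transpose_mul_mul_mulVec {ι : Type*} [Fintype ι] {κ : ι → Type*}
    [∀ i, Fintype (κ i)] (B : ∀ i, Matrix (κ i) n R) (c : ι → R)
    (M : ∀ i, Matrix (κ i) (κ i) R) (x : n → R) :
    x ⬝ᵥ (∑ i, c i • ((B i)ᵀ * M i * B i)) *ᵥ x
      = ∑ i, c i * ((B i *ᵥ x) ⬝ᵥ M i *ᵥ (B i *ᵥ x)) := by
  simp only [sum_mulVec, dotProduct_sum, smul_mulVec, dotProduct_smul, smul_eq_mul,
    dotProduct_transpose_mul_mul_mulVec]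

end QuadraticForm

variable {n : Type*} [Fintype n] {X Y : Matrix n n ℝ}

lemma PosSemidef.two_mul_dotProduct_mulVec_le (hX : X.PosSemidef) (u z : n → ℝ) :
    2 * (u ⬝ᵥ X *ᵥ z) ≤ u ⬝ᵥ X *ᵥ u + z ⬝ᵥ X *ᵥ z := by
  have hsymm : z ⬝ᵥ X *ᵥ u = u ⬝ᵥ X *ᵥ z := by
    rw [← dotProduct_transpose_mulVec, ← conjTranspose_eq_transpose_of_trivial, hX.isHermitian.eq]
  have h := hX.dotProduct_mulVec_nonneg (u - z)
  simp only [star_trivial, mulVec_sub, dotProduct_sub, sub_dotProduct, hsymm] at h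
  linarith

variable [DecidableEq n]

lemma PosDef.mul_nonsing_inv (hX : X.PosDef) : X * X⁻¹ = 1 :=
  Matrix.mul_nonsing_inv X ((isUnit_iff_isUnit_det X).mp hX.isUnit)

lemma PosDef.dotProduct_mulVec_inv_mulVec (hX : X.PosDef) (w : n → ℝ) :
    (X⁻¹ *ᵥ w) ⬝ᵥ X *ᵥ (X⁻¹ *ᵥ w) = w ⬝ᵥ X⁻¹ *ᵥ w := by
  rw [mulVec_mulVec, hX.mul_nonsing_inv, one_mulVec, dotProduct_comm]

lemma PosDef.two_mul_dotProduct_le (hX : X.PosDef) (u w : n → ℝ) :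
    2 * (u ⬝ᵥ w) ≤ u ⬝ᵥ X *ᵥ u + w ⬝ᵥ X⁻¹ *ᵥ w := by
  have h := hX.posSemidef.two_mul_dotProduct_mulVec_le u (X⁻¹ *ᵥ w)
  rwa [hX.dotProduct_mulVec_inv_mulVec, mulVec_mulVec, hX.mul_nonsing_inv, one_mulVec] at h

noncomputable def harmonicMean (X Y : Matrix n n ℝ) : Matrix n n ℝ := (X⁻¹ + Y⁻¹)⁻¹

lemma posDef_harmonicMean (hX : X.PosDef) (hY : Y.PosDef) : (harmonicMean X Y).PosDef :=
  (hX.inv.add hY.inv).inv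

lemma PosDef.inv_add_inv_mul_harmonicMean (hX : X.PosDef) (hY : Y.PosDef) :
    (X⁻¹ + Y⁻¹) * harmonicMean X Y = 1 :=
  (hX.inv.add hY.inv).mul_nonsing_inv

lemma PosDef.dotProduct_harmonicMean_mulVec (hX : X.PosDef) (hY : Y.PosDef) (x : n → ℝ) :
    x ⬝ᵥ harmonicMean X Y *ᵥ x
      = (harmonicMean X Y *ᵥ x) ⬝ᵥ X⁻¹ *ᵥ (harmonicMean X Y *ᵥ x)
        + (harmonicMean X Y *ᵥ x) ⬝ᵥ Y⁻¹ *ᵥ (harmonicMean X Y *ᵥ x) := by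
  rw [← dotProduct_add, ← add_mulVec, mulVec_mulVec, hX.inv_add_inv_mul_harmonicMean hY,
    one_mulVec, dotProduct_comm]

lemma PosDef.dotProduct_harmonicMean_mulVec_le (hX : X.PosDef) (hY : Y.PosDef) (u v : n → ℝ) :
    (u + v) ⬝ᵥ harmonicMean X Y *ᵥ (u + v) ≤ u ⬝ᵥ X *ᵥ u + v ⬝ᵥ Y *ᵥ v := by
  set w := harmonicMean X Y *ᵥ (u + v)
  have hu := hX.two_mul_dotProduct_le u w
  have hv := hY.two_mul_dotProduct_le v w
  have hw := hX.dotProduct_harmonicMean_mulVec hY (u + v)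
  rw [add_dotProduct] at hw ⊢
  linarith

lemma PosDef.exists_add_eq_and_dotProduct_harmonicMean_mulVec_eq (hX : X.PosDef) (hY : Y.PosDef)
    (x : n → ℝ) : ∃ u v, u + v = x ∧
      u ⬝ᵥ X *ᵥ u + v ⬝ᵥ Y *ᵥ v = x ⬝ᵥ harmonicMean X Y *ᵥ x := by
  set w := harmonicMean X Y *ᵥ x
  refine ⟨X⁻¹ *ᵥ w, Y⁻¹ *ᵥ w, ?_, ?_⟩
  · rw [← add_mulVec, mulVec_mulVec, hX.inv_add_inv_mul_harmonicMean hY, one_mulVec]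
  · rw [hX.dotProduct_mulVec_inv_mulVec, hY.dotProduct_mulVec_inv_mulVec,
      hX.dotProduct_harmonicMean_mulVec hY]

theorem posSemidef_harmonicMean_sum_sub_sum_harmonicMean {ι : Type*}
    [Fintype ι] {κ : ι → Type*} [∀ i, Fintype (κ i)] [∀ i, DecidableEq (κ i)]
    (B : ∀ i, Matrix (κ i) n ℝ) {c : ι → ℝ} (hc : ∀ i, 0 ≤ c i)
    {G A : ∀ i, Matrix (κ i) (κ i) ℝ} (hG : ∀ i, (G i).PosDef) (hA : ∀ i, (A i).PosDef)
    (hMG : (∑ i, c i • ((B i)ᵀ * G i * B i)).PosDef)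
    (hMA : (∑ i, c i • ((B i)ᵀ * A i * B i)).PosDef) :
    (harmonicMean (∑ i, c i • ((B i)ᵀ * G i * B i)) (∑ i, c i • ((B i)ᵀ * A i * B i))
      - ∑ i, c i • ((B i)ᵀ * harmonicMean (G i) (A i) * B i)).PosSemidef := by
  have hsum : (∑ i, c i • ((B i)ᵀ * harmonicMean (G i) (A i) * B i)).PosSemidef :=
    posSemidef_sum _ fun i _ => by
      have hH := (posDef_harmonicMean (hG i) (hA i)).posSemidef
      simpa only [conjTranspose_eq_transpose_of_trivial] using
        (hH.conjTranspose_mul_mul_same (B i)).smul (hc i)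
  refine posSemidef_iff_dotProduct_mulVec.mpr
    ⟨(posDef_harmonicMean hMG hMA).isHermitian.sub hsum.isHermitian, fun x => ?_⟩
  obtain ⟨u, v, rfl, huv⟩ := hMG.exists_add_eq_and_dotProduct_harmonicMean_mulVec_eq hMA x
  rw [star_trivial, sub_mulVec, dotProduct_sub, sub_nonneg, ← huv,
    dotProduct_sum_smul_transpose_mul_mul_mulVec, dotProduct_sum_smul_transpose_mul_mul_mulVec,
    dotProduct_sum_smul_transpose_mul_mul_mulVec, ← Finset.sum_add_distrib]
  gcongr with i
  rw [← mul_add, mulVec_add]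
  exact mul_le_mul_of_nonneg_left ((hG i).dotProduct_harmonicMean_mulVec_le (hA i) _ _) (hc i)

end Matrix

/-- Harmonic mean bound for sums over linear maps. -/
theorem stmt11 (n m : ℕ) (nj : Fin m → ℕ)
    (B : ∀ j : Fin m, Matrix (Fin (nj j)) (Fin n) ℝ)
    (c : Fin m → ℝ) (hc : ∀ j, 0 < c j)
    (G A : ∀ j : Fin m, Matrix (Fin (nj j)) (Fin (nj j)) ℝ)
    (hG : ∀ j, (G j).PosDef) (hA : ∀ j, (A j).PosDef)
    (hMG : (∑ j, c j • ((B j)ᵀ * G j * B j)).PosDef)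
    (hMA : (∑ j, c j • ((B j)ᵀ * A j * B j)).PosDef) :
    (((∑ j, c j • ((B j)ᵀ * G j * B j))⁻¹ + (∑ j, c j • ((B j)ᵀ * A j * B j))⁻¹)⁻¹
      - ∑ j, c j • ((B j)ᵀ * ((G j)⁻¹ + (A j)⁻¹)⁻¹ * B j)).PosSemidef :=
  posSemidef_harmonicMean_sum_sub_sum_harmonicMean B (fun j => (hc j).le) hG hA hMG hMA
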